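/- Define δ(u, v) = −u + v/φ. Let (u, v) be a Hofstadter G pair such that the Zeckendorf representation β = β_1…β_L of v has β_1 = 1 (i.e., v is in column 1 of the Fibonacci Zeckendorf array). Then −φ^{−1} < δ(u, v) < −φ^{−3}. -/

import Mathlib

/-!
Binet's formula gives `F (i + 1) / φ = F i - ψ ^ (i + 1)`, so for a Zeckendorf representation
`v = ∑ βᵢ F (i + 1)` we get `v / φ = N + δ` with `N = ∑ βᵢ F i` and `δ = -∑ βᵢ ψ ^ (i + 1)`.
A sum `∑ bⱼ ψ ^ j` with digits in `[0, 1]` lies in `(-1, φ)`; when the digits start with `1, 0`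
this forces `δ ∈ (ψ, ψ³)`, where `ψ = -φ⁻¹`. This interval lies in `[ψ, ψ + 1)`, so `N` is the
integer part of `(v + 1) / φ`, i.e. `N = G v`, and `δ` is `hofDelta (G v) v`.
-/

noncomputable def goldenphi : ℝ := (1 + Real.sqrt 5) / 2

noncomputable def hofG (x : ℕ) : ℕ := (⌊((x : ℝ) + 1) / goldenphi⌋).toNat

noncomputable def hofDelta (u v : ℕ) : ℝ := -(u : ℝ) + (v : ℝ) / goldenphi

open Finset Real goldenRatio

lemma goldenphi_eq : goldenphi = φ := by
  rw [goldenphi]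

lemma fib_succ_div_goldenRatio (n : ℕ) : (Nat.fib (n + 1) : ℝ) / φ = Nat.fib n - ψ ^ (n + 1) := by
  rw [div_eq_iff goldenRatio_ne_zero]
  linear_combination fib_succ_sub_goldenRatio_mul_fib n + ψ ^ n * goldenConj_mul_goldenRatio

lemma sum_mul_fib_succ_div_goldenRatio (s : Finset ℕ) (b : ℕ → ℕ) :
    ((∑ i ∈ s, b i * Nat.fib (i + 1) : ℕ) : ℝ) / φ
      = (∑ i ∈ s, b i * Nat.fib i : ℕ) - ∑ i ∈ s, (b i : ℝ) * ψ ^ (i + 1) := by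
  push_cast
  rw [sum_div, ← sum_sub_distrib]
  refine sum_congr rfl fun i _ => ?_
  rw [mul_div_assoc, fib_succ_div_goldenRatio]
  ring

/-- Since `ψ ∈ (-1, 0)`, the extreme values are approached by the digits `1, 0, 1, 0, …`
(giving `1 / (1 - ψ²) = φ`) and `0, 1, 0, 1, …` (giving `ψ / (1 - ψ²) = -1`). -/
lemma sum_mul_goldenConj_pow_mem_Ioo (n : ℕ) (b : ℕ → ℝ) (hb : ∀ j, b j ∈ Set.Icc 0 1) :
    ∑ j ∈ range n, b j * ψ ^ j ∈ Set.Ioo (-1) φ := by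
  induction n generalizing b with
  | zero => simpa using goldenRatio_pos
  | succ n ih =>
    obtain ⟨hX₁, hX₂⟩ := ih (fun j => b (j + 1)) fun j => hb (j + 1)
    obtain ⟨hb₁, hb₂⟩ := hb 0
    have hsplit : ∑ j ∈ range (n + 1), b j * ψ ^ j
        = b 0 + ψ * ∑ j ∈ range n, b (j + 1) * ψ ^ j := by
      rw [sum_range_succ', mul_sum, pow_zero, mul_one, add_comm]
      exact congrArg _ (sum_congr rfl fun j _ => by ring)
    have hψ := goldenConj_neg
    rw [hsplit]
    constructor
    · nlinarith [goldenConj_mul_goldenRatio]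
    · nlinarith [one_sub_goldenRatio]

lemma sum_mul_goldenConj_pow_mem_Ioo_of_one_zero (n : ℕ) (hn : 0 < n) (b : ℕ → ℝ)
    (hb : ∀ j, b j ∈ Set.Icc 0 1) (hb0 : b 0 = 1) (hb1 : 1 < n → b 1 = 0) :
    ∑ j ∈ range n, b j * ψ ^ j ∈ Set.Ioo (-ψ) φ := by
  obtain ⟨m, rfl | rfl⟩ : ∃ m, n = 1 ∨ n = m + 2 := ⟨n - 2, by omega⟩
  · simpa [hb0] using ⟨by linarith [neg_one_lt_goldenConj], one_lt_goldenRatio⟩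
  · obtain ⟨hX₁, hX₂⟩ := sum_mul_goldenConj_pow_mem_Ioo m (fun j => b (j + 2)) fun j => hb (j + 2)
    have hsplit : ∑ j ∈ range (m + 2), b j * ψ ^ j
        = 1 + ψ ^ 2 * ∑ j ∈ range m, b (j + 2) * ψ ^ j := by
      rw [sum_range_succ', sum_range_succ', mul_sum, hb0, hb1 (by omega), pow_zero, mul_one,
        zero_mul, add_zero, add_comm]
      exact congrArg _ (sum_congr rfl fun j _ => by ring)
    have hψ := goldenConj_neg
    rw [hsplit, goldenConj_sq]
    constructor
    · nlinarith [neg_one_lt_goldenConj]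
    · nlinarith [goldenConj_mul_goldenRatio, one_sub_goldenRatio]

lemma hofDelta_hofG_eq {v N : ℕ} {δ : ℝ} (h : (v : ℝ) / φ = N + δ) (hδ : δ ∈ Set.Ico ψ (ψ + 1)) :
    hofDelta (hofG v) v = δ := by
  have hfloor : ⌊((v : ℝ) + 1) / φ⌋ = N := by
    rw [add_div, h, one_div, inv_goldenRatio, Int.floor_eq_iff]
    push_cast
    constructor <;> linarith [hδ.1, hδ.2]
  rw [hofDelta, hofG, goldenphi_eq, hfloor, h]
  simp

lemma neg_goldenConj_sq_mul_mem_Ioo {T : ℝ} (hT : T ∈ Set.Ioo (-ψ) φ) :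
    -ψ ^ 2 * T ∈ Set.Ioo ψ (ψ ^ 3) := by
  have hψ2 : 0 < ψ ^ 2 := by nlinarith [goldenConj_neg]
  have hψ2φ : ψ ^ 2 * φ = -ψ := by
    rw [sq, mul_assoc, goldenConj_mul_goldenRatio]
    ring
  have := mul_lt_mul_of_pos_left hT.1 hψ2
  have := mul_lt_mul_of_pos_left hT.2 hψ2
  constructor <;> nlinarith

theorem stmt_13_general (u v L : ℕ) (β : ℕ → ℕ) (hL : 0 < L)
    (hbit : ∀ i, β i = 0 ∨ β i = 1)
    (hnoconsec : ∀ i, 1 ≤ i → i < L → ¬(β i = 1 ∧ β (i + 1) = 1))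
    (hv : v = ∑ i ∈ Finset.Icc 1 L, β i * Nat.fib (i + 1))
    (hu : u = hofG v) (hβ1 : β 1 = 1) :
    -goldenphi⁻¹ < hofDelta u v ∧ hofDelta u v < -(goldenphi ^ 3)⁻¹ := by
  set T : ℝ := ∑ j ∈ range L, (β (j + 1) : ℝ) * ψ ^ j
  have hT : T ∈ Set.Ioo (-ψ) φ := by
    refine sum_mul_goldenConj_pow_mem_Ioo_of_one_zero L hL _ (fun j => ?_) (by simp [hβ1])
      fun hL1 => ?_
    · rcases hbit (j + 1) with h | h <;> simp [h]
    · have := hnoconsec 1 le_rfl hL1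
      rcases hbit 2 with h | h <;> simp_all
  have hreindex : ∑ i ∈ Icc 1 L, (β i : ℝ) * ψ ^ (i + 1) = ψ ^ 2 * T := by
    rw [← Ico_add_one_right_eq_Icc, sum_Ico_eq_sum_range, Nat.add_sub_cancel, mul_sum]
    exact sum_congr rfl fun j _ => by rw [add_comm 1 j]; ring
  have hv' : (v : ℝ) / φ = (∑ i ∈ Icc 1 L, β i * Nat.fib i : ℕ) + -ψ ^ 2 * T := by
    rw [hv, sum_mul_fib_succ_div_goldenRatio, hreindex]
    ring
  have hδ := neg_goldenConj_sq_mul_mem_Ioo hT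
  have hψ3 : ψ ^ 3 < ψ + 1 := by nlinarith [goldenConj_sq, goldenConj_neg]
  rw [hu, hofDelta_hofG_eq hv' ⟨hδ.1.le, hδ.2.trans hψ3⟩, goldenphi_eq, ← inv_pow, inv_goldenRatio]
  constructor <;> linarith [hδ.1, hδ.2]

theorem stmt_13 (u v L : ℕ) (β : ℕ → ℕ) (hL : 0 < L)
    (hbit : ∀ i, β i = 0 ∨ β i = 1) (hlast : β L = 1)
    (hnoconsec : ∀ i, 1 ≤ i → i < L → ¬(β i = 1 ∧ β (i + 1) = 1))
    (hv : v = ∑ i ∈ Finset.Icc 1 L, β i * Nat.fib (i + 1))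
    (hu : u = hofG v) (hβ1 : β 1 = 1) :
    -goldenphi⁻¹ < hofDelta u v ∧ hofDelta u v < -(goldenphi ^ 3)⁻¹ :=
  stmt_13_general u v L β hL hbit hnoconsec hv hu hβ1
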